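/- Let G = (√5+1)/2 and let T_o : [-1/2,1/2] → [-1/2,1/2] be defined by T_o(0) = 0 and T_o(x) = 1/x - ⌊1/x + 1/2⌋ for x ≠ 0. Then the probability measure dμ_o = (1/(2 log G))(1/(G+|x|) + 1/(G+1-|x|)) dx on [-1/2,1/2] is T_o-invariant. -/

import Mathlib

/-!
The inverse branches of `T_o` are `y ↦ (y + n)⁻¹`, `n ∈ ℤ`, each defined on
`{y ∈ [-1/2, 1/2) : |y + n| ≥ 2}`. By the change of variables formula, `μ_o (T_o⁻¹ E)` is the
integral over `E` of the Perron–Frobenius sum `∑ₙ h((y + n)⁻¹) / (y + n)²`, `h` the density.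
Because `φ² = φ + 1`, the term with `|y + n| = a` is `(1/(a + φ - 2) - 1/(a + φ - 1)) / (2 log φ)`,
so for `y ≠ 0` the sums over `n > 0` and over `n < 0` telescope to the two summands
`1/(φ + |y|)` and `1/(φ + 1 - |y|)` of `h(y)`. The mass `1` comes from the antiderivative
`log (φ + x) - log (φ + 1 - x)` on `[0, 1/2]`, again using `φ + 1 = φ²`.
-/

open MeasureTheory

noncomputable def oddNICF (x : ℝ) : ℝ :=
  if x = 0 then 0 else 1 / x - ⌊1 / x + 1 / 2⌋

noncomputable def oddNICFMeasure : Measure ℝ :=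
  (volume.restrict (Set.Icc (-(1 / 2) : ℝ) (1 / 2))).withDensity
    (fun x => ENNReal.ofReal
      ((1 / ((Real.sqrt 5 + 1) / 2 + |x|) + 1 / ((Real.sqrt 5 + 1) / 2 + 1 - |x|)) /
        (2 * Real.log ((Real.sqrt 5 + 1) / 2))))

open Set Real Function
open scoped ENNReal goldenRatio

theorem setLIntegral_preimage_eq_lintegral_tsum_branches {ι : Type*} [Countable ι]
    {T : ℝ → ℝ} {S E : Set ℝ} {D : ι → Set ℝ} {f f' : ι → ℝ → ℝ} {ρ : ℝ → ℝ≥0∞}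
    (hE : MeasurableSet E) (hD : ∀ i, MeasurableSet (D i)) (hρ : Measurable ρ)
    (hfm : ∀ i, Measurable (f i)) (hf'm : ∀ i, Measurable (f' i))
    (hf : ∀ i, ∀ y ∈ D i, HasDerivWithinAt (f i) (f' i y) (D i) y)
    (hf_inj : ∀ i, InjOn (f i) (D i)) (hf_maps : ∀ i, MapsTo (f i) (D i) S)
    (hTf : ∀ i, ∀ y ∈ D i, T (f i y) = y) (hcover : S ⊆ ⋃ i, f i '' D i)
    (hdisj : Pairwise (Disjoint on fun i => f i '' D i)) :
    ∫⁻ x in T ⁻¹' E ∩ S, ρ x =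
      ∫⁻ y in E, ∑' i, (D i).indicator (fun y => ENNReal.ofReal |f' i y| * ρ (f i y)) y := by
  have hpre : T ⁻¹' E ∩ S = ⋃ i, f i '' (D i ∩ E) := by
    ext x
    simp only [mem_inter_iff, mem_preimage, mem_iUnion, mem_image]
    constructor
    · rintro ⟨hxE, hxS⟩
      obtain ⟨i, y, hy, rfl⟩ := mem_iUnion.mp (hcover hxS)
      exact ⟨i, y, ⟨hy, hTf i y hy ▸ hxE⟩, rfl⟩
    · rintro ⟨i, y, ⟨hy, hyE⟩, rfl⟩
      exact ⟨(hTf i y hy).symm ▸ hyE, hf_maps i hy⟩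
  have hfE : ∀ i, ∀ y ∈ D i ∩ E, HasDerivWithinAt (f i) (f' i y) (D i ∩ E) y :=
    fun i y hy => (hf i y hy.1).mono inter_subset_left
  calc ∫⁻ x in T ⁻¹' E ∩ S, ρ x
      = ∑' i, ∫⁻ x in f i '' (D i ∩ E), ρ x := by
        rw [hpre, lintegral_iUnion]
        · exact fun i => measurable_image_of_fderivWithin ((hD i).inter hE)
            (fun y hy => (hfE i y hy).hasFDerivWithinAt) ((hf_inj i).mono inter_subset_left)
        · exact fun i j hij => (hdisj hij).mono (image_mono inter_subset_left)
            (image_mono inter_subset_left)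
    _ = ∑' i, ∫⁻ y in D i ∩ E, ENNReal.ofReal |f' i y| * ρ (f i y) := by
        congr 1 with i
        exact lintegral_image_eq_lintegral_abs_deriv_mul ((hD i).inter hE) (hfE i)
          ((hf_inj i).mono inter_subset_left) ρ
    _ = ∑' i, ∫⁻ y in E, (D i).indicator (fun y => ENNReal.ofReal |f' i y| * ρ (f i y)) y := by
        congr 1 with i
        rw [lintegral_indicator (hD i), Measure.restrict_restrict (hD i)]
    _ = _ := by
        refine (lintegral_tsum fun i => (Measurable.indicator ?_ (hD i)).aemeasurable).symm
        exact ((hf'm i).abs.ennreal_ofReal).mul (hρ.comp (hfm i))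

theorem hasSum_one_div_add_sub_one_div_add_one {b : ℝ} (hb : 0 < b) :
    HasSum (fun k : ℕ => 1 / (k + b) - 1 / (k + 1 + b)) (1 / b) := by
  have hcast : ∀ k : ℕ, 1 / ((k + 1 : ℕ) + b) = 1 / ((k : ℝ) + 1 + b) := by simp
  rw [hasSum_iff_tendsto_nat_of_nonneg fun k =>
    sub_nonneg.2 (one_div_le_one_div_of_le (by positivity) (by linarith))]
  simp_rw [← hcast, Finset.sum_range_sub' (fun k : ℕ => 1 / ((k : ℝ) + b)), Nat.cast_zero, zero_add]
  have hlim : Filter.Tendsto (fun n : ℕ => 1 / ((n : ℝ) + b)) Filter.atTop (nhds 0) := by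
    simp only [one_div]
    exact (Filter.tendsto_atTop_add_const_right _ b tendsto_natCast_atTop_atTop).inv_tendsto_atTop
  simpa using hlim.const_sub (1 / b)

theorem log_goldenRatio_pos : 0 < log φ := log_pos one_lt_goldenRatio

noncomputable def oddNICFDensity (x : ℝ) : ℝ :=
  (1 / (φ + |x|) + 1 / (φ + 1 - |x|)) / (2 * log φ)

theorem oddNICFMeasure_eq : oddNICFMeasure =
    (volume.restrict (Icc (-(1 / 2)) (1 / 2))).withDensity
      fun x => ENNReal.ofReal (oddNICFDensity x) := by
  have hφ : (√5 + 1) / 2 = φ := by rw [goldenRatio, add_comm]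
  simp only [oddNICFMeasure, oddNICFDensity, hφ]

theorem oddNICFMeasure_apply (s : Set ℝ) :
    oddNICFMeasure s = ∫⁻ x in s ∩ Icc (-(1 / 2)) (1 / 2), ENNReal.ofReal (oddNICFDensity x) := by
  rw [oddNICFMeasure_eq, withDensity_apply', Measure.restrict_restrict' measurableSet_Icc]

theorem oddNICFDensity_neg (x : ℝ) : oddNICFDensity (-x) = oddNICFDensity x := by
  rw [oddNICFDensity, oddNICFDensity, abs_neg]

theorem oddNICFDensity_nonneg {x : ℝ} (hx : |x| ≤ 1) : 0 ≤ oddNICFDensity x := by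
  have : 0 < φ + 1 - |x| := by linarith [one_lt_goldenRatio]
  have := log_goldenRatio_pos
  unfold oddNICFDensity
  positivity

theorem measurable_oddNICFDensity : Measurable oddNICFDensity := by
  unfold oddNICFDensity
  fun_prop

theorem continuousOn_oddNICFDensity : ContinuousOn oddNICFDensity (Icc (-1) 1) := by
  have hφ := one_lt_goldenRatio
  unfold oddNICFDensity
  refine ContinuousOn.div_const (ContinuousOn.add ?_ ?_) _ <;>
    refine continuousOn_const.div (by fun_prop) fun x hx => ?_
  · positivity
  · have := abs_le.mpr hx
    linarith

theorem integral_oddNICFDensity_zero_half :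
    ∫ x in (0 : ℝ)..(1 / 2), oddNICFDensity x = 1 / 2 := by
  have hφ := one_lt_goldenRatio
  have hleft : ∫ x in (0 : ℝ)..(1 / 2), 1 / (φ + x) = log ((φ + 1 / 2) / φ) := by
    rw [intervalIntegral.integral_comp_add_left (fun t => 1 / t), add_zero,
      integral_one_div_of_pos (by positivity) (by positivity)]
  have hright : ∫ x in (0 : ℝ)..(1 / 2), 1 / (φ + 1 - x) = log ((φ + 1) / (φ + 1 / 2)) := by
    rw [intervalIntegral.integral_comp_sub_left (fun t => 1 / t), sub_zero,
      integral_one_div_of_pos (by linarith) (by positivity), add_sub_assoc]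
    norm_num
  have hsum : log ((φ + 1 / 2) / φ) + log ((φ + 1) / (φ + 1 / 2)) = log φ := by
    rw [← log_mul (by positivity) (by positivity), ← goldenRatio_sq]
    congr 1
    field_simp
  calc ∫ x in (0 : ℝ)..(1 / 2), oddNICFDensity x
      = (∫ x in (0 : ℝ)..(1 / 2), (1 / (φ + x) + 1 / (φ + 1 - x))) / (2 * log φ) := by
        rw [← intervalIntegral.integral_div]
        refine intervalIntegral.integral_congr fun x hx => ?_
        rw [uIcc_of_le (by norm_num)] at hx
        rw [oddNICFDensity, abs_of_nonneg hx.1]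
    _ = 1 / 2 := by
        rw [intervalIntegral.integral_add, hleft, hright, hsum]
        · field_simp [log_goldenRatio_pos.ne']
        all_goals refine intervalIntegral.intervalIntegrable_one_div (fun x hx => ?_) (by fun_prop)
        all_goals rw [uIcc_of_le (by norm_num)] at hx
        · linarith [hx.1]
        · linarith [hx.2]

theorem integral_oddNICFDensity : ∫ x in Icc (-(1 / 2) : ℝ) (1 / 2), oddNICFDensity x = 1 := by
  have hint : ∀ a b : ℝ, -1 ≤ a → a ≤ b → b ≤ 1 → IntervalIntegrable oddNICFDensity volume a b :=
    fun a b ha hab hb => (continuousOn_oddNICFDensity.mono <| by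
      rw [uIcc_of_le hab]; exact Icc_subset_Icc ha hb).intervalIntegrable
  have hneg : ∫ x in (-(1 / 2) : ℝ)..0, oddNICFDensity x = 1 / 2 := by
    have := intervalIntegral.integral_comp_neg (a := 0) (b := 1 / 2) oddNICFDensity
    simp only [oddNICFDensity_neg, neg_zero] at this
    rw [← this, integral_oddNICFDensity_zero_half]
  rw [integral_Icc_eq_integral_Ioc, ← intervalIntegral.integral_of_le (by norm_num),
    ← intervalIntegral.integral_add_adjacent_intervals (hint (-(1 / 2)) 0 (by norm_num)
      (by norm_num) (by norm_num)) (hint 0 (1 / 2) (by norm_num) (by norm_num) (by norm_num)), hneg,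
    integral_oddNICFDensity_zero_half]
  norm_num

instance isProbabilityMeasure_oddNICFMeasure : IsProbabilityMeasure oddNICFMeasure := by
  constructor
  rw [oddNICFMeasure_apply, univ_inter, ← ofReal_integral_eq_lintegral_ofReal,
    integral_oddNICFDensity, ENNReal.ofReal_one]
  · exact (continuousOn_oddNICFDensity.mono (Icc_subset_Icc (by norm_num) (by norm_num))
      |>.integrableOn_compact isCompact_Icc)
  · filter_upwards [ae_restrict_mem measurableSet_Icc] with x hx
    exact oddNICFDensity_nonneg (abs_le.mpr ⟨by linarith [hx.1], by linarith [hx.2]⟩)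

theorem sub_floor_add_half_mem_Ico (t : ℝ) : t - ⌊t + 1 / 2⌋ ∈ Ico (-(1 / 2) : ℝ) (1 / 2) := by
  constructor <;> linarith [Int.floor_le (t + 1 / 2), Int.lt_floor_add_one (t + 1 / 2)]

theorem floor_add_intCast_add_half {y : ℝ} (hy : y ∈ Ico (-(1 / 2) : ℝ) (1 / 2)) (n : ℤ) :
    ⌊y + n + 1 / 2⌋ = n := by
  rw [Int.floor_eq_iff]
  constructor <;> linarith [hy.1, hy.2]

theorem mem_Icc_half_iff_two_le_abs_inv {x : ℝ} (hx : x ≠ 0) :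
    x ∈ Icc (-(1 / 2) : ℝ) (1 / 2) ↔ 2 ≤ |x⁻¹| := by
  rw [mem_Icc, ← abs_le, abs_inv, le_inv_comm₀ two_pos (abs_pos.2 hx), one_div]

/-- The image under `oddNICF` of the cylinder of digit `n`, on which `y ↦ (y + n)⁻¹` inverts
`oddNICF`. -/
def oddNICFBranchDomain (n : ℤ) : Set ℝ := {y | y ∈ Ico (-(1 / 2)) (1 / 2) ∧ 2 ≤ |y + n|}

theorem measurableSet_oddNICFBranchDomain (n : ℤ) : MeasurableSet (oddNICFBranchDomain n) :=
  measurableSet_Ico.inter (measurableSet_le measurable_const (measurable_id.add_const _).abs)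

theorem add_ne_zero_of_mem_oddNICFBranchDomain {y : ℝ} {n : ℤ} (hy : y ∈ oddNICFBranchDomain n) :
    y + n ≠ 0 :=
  abs_pos.mp (zero_lt_two.trans_le hy.2)

theorem oddNICF_inv_add {y : ℝ} {n : ℤ} (hy : y ∈ oddNICFBranchDomain n) :
    oddNICF (y + n)⁻¹ = y := by
  rw [oddNICF, if_neg (inv_ne_zero (add_ne_zero_of_mem_oddNICFBranchDomain hy)), one_div, inv_inv,
    floor_add_intCast_add_half hy.1]
  ring

theorem setLIntegral_preimage_oddNICF {ρ : ℝ → ℝ≥0∞} (hρ : Measurable ρ) {E : Set ℝ}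
    (hE : MeasurableSet E) :
    ∫⁻ x in oddNICF ⁻¹' E ∩ (Icc (-(1 / 2)) (1 / 2) \ {0}), ρ x =
      ∫⁻ y in E, ∑' n : ℤ, (oddNICFBranchDomain n).indicator
        (fun y => ENNReal.ofReal |-1 / (y + n) ^ 2| * ρ (y + n)⁻¹) y := by
  refine setLIntegral_preimage_eq_lintegral_tsum_branches hE measurableSet_oddNICFBranchDomain hρ
    (fun n => by fun_prop) (fun n => by fun_prop) (fun n y hy => ?_) (fun n a _ b _ h => ?_)
    (fun n y hy => ?_) (fun n y hy => oddNICF_inv_add hy) (fun x hx => ?_) (fun n m hnm => ?_)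
  · exact (((hasDerivAt_id y).add_const (n : ℝ)).inv
      (add_ne_zero_of_mem_oddNICFBranchDomain hy)).hasDerivWithinAt
  · simpa using h
  · have hne := add_ne_zero_of_mem_oddNICFBranchDomain hy
    refine ⟨(mem_Icc_half_iff_two_le_abs_inv (inv_ne_zero hne)).2 ?_, inv_ne_zero hne⟩
    rw [inv_inv]
    exact hy.2
  · obtain ⟨hxI, hx0⟩ := hx
    refine mem_iUnion.2 ⟨⌊1 / x + 1 / 2⌋, 1 / x - ⌊1 / x + 1 / 2⌋,
      ⟨sub_floor_add_half_mem_Ico _, ?_⟩, ?_⟩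
    · rw [sub_add_cancel, one_div, ← mem_Icc_half_iff_two_le_abs_inv hx0]
      exact hxI
    · simp
  · refine disjoint_left.2 ?_
    rintro _ ⟨y, hy, rfl⟩ ⟨y', hy', hyy'⟩
    simp only at hyy'
    obtain rfl : y' = y := by rw [← oddNICF_inv_add hy', hyy', oddNICF_inv_add hy]
    exact hnm (by simpa using hyy'.symm)

/-- Partial fractions: `(a (φ a + 1))⁻¹ = a⁻¹ - (a + φ - 1)⁻¹` and
`(a ((φ + 1) a - 1))⁻¹ = (a + φ - 2)⁻¹ - a⁻¹`, both by `φ² = φ + 1`. -/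
theorem oddNICFDensity_inv_div_sq {a : ℝ} (ha : 1 ≤ a) :
    oddNICFDensity a⁻¹ / a ^ 2 = (1 / (a + φ - 2) - 1 / (a + φ - 1)) / (2 * log φ) := by
  have ha0 : 0 < a := by linarith
  have hsq := goldenRatio_sq
  have hφ := one_lt_goldenRatio
  rw [oddNICFDensity, abs_of_pos (inv_pos.2 ha0), div_right_comm]
  congr 1
  generalize φ = g at *
  have h1 : g * a + 1 ≠ 0 := by positivity
  have h2 : a * (g + 1) - 1 ≠ 0 := by nlinarith
  have h3 : a + g - 2 ≠ 0 := by nlinarith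
  have h4 : a + g - 1 ≠ 0 := by linarith
  field_simp
  linear_combination a * (-a ^ 2 + 4 * a + 2 * g - 3) * hsq

/-- The weight `|d/dy (y + n)⁻¹| · h ((y + n)⁻¹)` of the branch of digit `n` in the
Perron–Frobenius sum at `y`, as a function of `w = y + n`. -/
noncomputable def oddNICFTransferWeight (w : ℝ) : ℝ≥0∞ :=
  if 2 ≤ |w| then ENNReal.ofReal (oddNICFDensity w⁻¹ / w ^ 2) else 0

theorem oddNICFTransferWeight_neg (w : ℝ) :
    oddNICFTransferWeight (-w) = oddNICFTransferWeight w := by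
  simp only [oddNICFTransferWeight, abs_neg, inv_neg, oddNICFDensity_neg, neg_sq]

theorem oddNICFTransferWeight_of_abs_lt {w : ℝ} (hw : |w| < 2) : oddNICFTransferWeight w = 0 :=
  if_neg hw.not_ge

theorem tsum_oddNICFTransferWeight_add_nat {c : ℝ} (hc : 0 ≤ c) :
    ∑' k : ℕ, oddNICFTransferWeight (c + (k + 2)) = ENNReal.ofReal (1 / (c + φ) / (2 * log φ)) := by
  have hsum := (hasSum_one_div_add_sub_one_div_add_one (b := c + φ)
    (by linarith [goldenRatio_pos])).div_const (2 * log φ)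
  have hterm : ∀ k : ℕ, oddNICFTransferWeight (c + (k + 2)) =
      ENNReal.ofReal ((1 / (k + (c + φ)) - 1 / (k + 1 + (c + φ))) / (2 * log φ)) := by
    intro k
    have hk : 2 ≤ c + (k + 2) := by have := k.cast_nonneg (α := ℝ); linarith
    rw [oddNICFTransferWeight, if_pos (hk.trans (le_abs_self _)),
      oddNICFDensity_inv_div_sq (by linarith)]
    ring_nf
  simp_rw [hterm]
  rw [← ENNReal.ofReal_tsum_of_nonneg (fun k => ?_) hsum.summable, hsum.tsum_eq]
  exact div_nonneg (sub_nonneg.2 (one_div_le_one_div_of_le (by positivity) (by linarith)))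
    (mul_pos two_pos log_goldenRatio_pos).le

theorem tsum_oddNICFTransferWeight_add_nat_of_neg {c : ℝ} (hc : -1 ≤ c) (hc0 : c < 0) :
    ∑' k : ℕ, oddNICFTransferWeight (c + (k + 2)) =
      ∑' k : ℕ, oddNICFTransferWeight (c + 1 + (k + 2)) := by
  rw [tsum_eq_zero_add' ENNReal.summable, Nat.cast_zero,
    oddNICFTransferWeight_of_abs_lt (abs_lt.2 ⟨by linarith, by linarith⟩), zero_add]
  exact tsum_congr fun k => by push_cast; ring_nf

theorem tsum_int_oddNICFTransferWeight_eq_tsum_nat_add {y : ℝ} (hy : |y| < 1) :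
    ∑' n : ℤ, oddNICFTransferWeight (y + n) =
      ∑' k : ℕ, oddNICFTransferWeight (y + (k + 2)) +
        ∑' k : ℕ, oddNICFTransferWeight (-y + (k + 2)) := by
  obtain ⟨hy₁, hy₂⟩ := abs_lt.mp hy
  rw [tsum_of_add_one_of_neg_add_one ENNReal.summable ENNReal.summable]
  push_cast
  rw [tsum_eq_zero_add' (f := fun n : ℕ => oddNICFTransferWeight (y + (n + 1))) ENNReal.summable,
    tsum_eq_zero_add' (f := fun n : ℕ => oddNICFTransferWeight (y + -(n + 1))) ENNReal.summable]
  simp only [Nat.cast_zero, Nat.cast_add, Nat.cast_one]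
  rw [oddNICFTransferWeight_of_abs_lt (w := y + (0 + 1)) (abs_lt.2 ⟨by linarith, by linarith⟩),
    oddNICFTransferWeight_of_abs_lt (w := y + 0) (abs_lt.2 ⟨by linarith, by linarith⟩),
    oddNICFTransferWeight_of_abs_lt (w := y + -(0 + 1)) (abs_lt.2 ⟨by linarith, by linarith⟩)]
  simp only [zero_add, add_zero]
  congr 1
  · exact tsum_congr fun k => by ring_nf
  · refine tsum_congr fun k => ?_
    rw [← oddNICFTransferWeight_neg]
    ring_nf

theorem tsum_int_oddNICFTransferWeight_eq_oddNICFDensity {y : ℝ} (hy : |y| < 1) (hy0 : y ≠ 0) :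
    ∑' n : ℤ, oddNICFTransferWeight (y + n) = ENNReal.ofReal (oddNICFDensity y) := by
  wlog hpos : 0 < y generalizing y
  · have := this (y := -y) (by rwa [abs_neg]) (neg_ne_zero.2 hy0)
      (neg_pos.2 (lt_of_le_of_ne (not_lt.1 hpos) hy0))
    rwa [tsum_int_oddNICFTransferWeight_eq_tsum_nat_add (by rwa [abs_neg]), neg_neg, add_comm,
      ← tsum_int_oddNICFTransferWeight_eq_tsum_nat_add hy, oddNICFDensity_neg] at this
  have hφ := goldenRatio_pos
  have hL := log_goldenRatio_pos
  have hy1 : y < 1 := (abs_lt.mp hy).2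
  rw [tsum_int_oddNICFTransferWeight_eq_tsum_nat_add hy, tsum_oddNICFTransferWeight_add_nat hpos.le,
    tsum_oddNICFTransferWeight_add_nat_of_neg (by linarith) (by linarith),
    tsum_oddNICFTransferWeight_add_nat (by linarith), ← ENNReal.ofReal_add (by positivity)
    (div_nonneg (one_div_nonneg.2 (by linarith)) (by positivity)), oddNICFDensity, abs_of_pos hpos]
  congr 1
  ring

theorem indicator_oddNICFBranchDomain_eq_transferWeight {y : ℝ}
    (hy : y ∈ Ico (-(1 / 2) : ℝ) (1 / 2)) (n : ℤ) :
    (oddNICFBranchDomain n).indicator (fun y => ENNReal.ofReal |-1 / (y + n) ^ 2| *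
      ENNReal.ofReal (oddNICFDensity (y + n)⁻¹)) y = oddNICFTransferWeight (y + n) := by
  by_cases h : 2 ≤ |y + n|
  · rw [indicator_of_mem (show y ∈ oddNICFBranchDomain n from ⟨hy, h⟩), oddNICFTransferWeight,
      if_pos h, ← ENNReal.ofReal_mul (abs_nonneg _), abs_div, abs_neg, abs_one,
      abs_of_nonneg (sq_nonneg _), one_div_mul_eq_div]
  · rw [indicator_of_notMem fun h' => h h'.2, oddNICFTransferWeight, if_neg h]

theorem setLIntegral_preimage_oddNICF_density {E : Set ℝ} (hE : MeasurableSet E)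
    (hEI : E ⊆ Icc (-(1 / 2)) (1 / 2)) :
    ∫⁻ x in oddNICF ⁻¹' E ∩ Icc (-(1 / 2)) (1 / 2), ENNReal.ofReal (oddNICFDensity x) =
      ∫⁻ y in E, ENNReal.ofReal (oddNICFDensity y) := by
  rw [← setLIntegral_congr (sdiff_null_ae_eq_self (measure_singleton (0 : ℝ))), inter_sdiff_assoc,
    setLIntegral_preimage_oddNICF measurable_oddNICFDensity.ennreal_ofReal hE]
  refine setLIntegral_congr_fun_ae hE ?_
  filter_upwards [(countable_singleton (0 : ℝ)).insert (1 / 2) |>.ae_notMem volume]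
    with y hy hyE
  simp only [mem_insert_iff, mem_singleton_iff, not_or] at hy
  obtain ⟨hy₁, hy₂⟩ := hEI hyE
  simp_rw [indicator_oddNICFBranchDomain_eq_transferWeight ⟨hy₁, lt_of_le_of_ne hy₂ hy.1⟩]
  exact tsum_int_oddNICFTransferWeight_eq_oddNICFDensity (abs_lt.2 ⟨by linarith, by linarith⟩) hy.2

theorem oddNICFMeasure_invariant :
    IsProbabilityMeasure oddNICFMeasure ∧
    ∀ E ⊆ Set.Icc (-(1 / 2) : ℝ) (1 / 2), MeasurableSet E →
      oddNICFMeasure (oddNICF ⁻¹' E) = oddNICFMeasure E := by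
  refine ⟨inferInstance, fun E hEI hE => ?_⟩
  rw [oddNICFMeasure_apply, oddNICFMeasure_apply, inter_eq_left.2 hEI]
  exact setLIntegral_preimage_oddNICF_density hE hEI
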